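/- Let A be a left brace and let I, J be ideals of A. Then for every c ∈ A, I*(J*c) ⊆ I*c + I*(−c) + I*(I*c) + J*(I*c) + I*(J*(I*c)) + I*(I*(−c)) + J*(I*(−c)) + I*(J*(I*(−c))), where the right-hand side denotes the set of sums of one element from each of the eight sets. -/
import Mathlib


/-- A left brace: `(A,+)` abelian group, `(A,∘)` a group, with
`a ∘ (b + c) + a = a ∘ b + a ∘ c`. -/
structure LeftBrace (A : Type) [AddCommGroup A] where
  circ : A → A → A
  one : A
  inv : A → A
  circ_assoc : ∀ a b c, circ (circ a b) c = circ a (circ b c)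
  one_circ : ∀ a, circ one a = a
  circ_one : ∀ a, circ a one = a
  inv_circ : ∀ a, circ (inv a) a = one
  circ_add : ∀ a b c, circ a (b + c) + a = circ a b + circ a c

namespace LeftBrace

variable {A : Type} [AddCommGroup A]

/-- `a * b = a ∘ b - a - b`. -/
def star (B : LeftBrace A) (a b : A) : A := B.circ a b - a - b

/-- `lchain B n = Aⁿ` for `n ≥ 1` (and `lchain B 0 = ⊤`): `A¹ = A`, and
`Aⁿ⁺¹` is the additive subgroup generated by `{a * b : a ∈ A, b ∈ Aⁿ}`. -/
def lchain (B : LeftBrace A) : ℕ → AddSubgroup A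
  | 0 => ⊤
  | 1 => ⊤
  | n + 2 => AddSubgroup.closure {x | ∃ a : A, ∃ b ∈ B.lchain (n + 1), x = B.star a b}

/-- `rchain B n = A⁽ⁿ⁾` for `n ≥ 1`: `A⁽¹⁾ = A`, and `A⁽ⁿ⁺¹⁾` is the additive
subgroup generated by `{a * b : a ∈ A⁽ⁿ⁾, b ∈ A}`. -/
def rchain (B : LeftBrace A) : ℕ → AddSubgroup A
  | 0 => ⊤
  | 1 => ⊤
  | n + 2 => AddSubgroup.closure {x | ∃ a ∈ B.rchain (n + 1), ∃ b : A, x = B.star a b}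

/-- `schain B n = A^[n]` for `n ≥ 1`:  `A^[1] = A`, and
`A^[i+1] = Σ_{j=1}^{i} A^[j] * A^[i+1-j]` (additive subgroup generated by the
corresponding products). -/
def schain (B : LeftBrace A) : ℕ → AddSubgroup A
  | 0 => ⊤
  | 1 => ⊤
  | n + 2 => AddSubgroup.closure
      {x | ∃ j : Fin (n + 1), ∃ u ∈ B.schain (j.1 + 1), ∃ v ∈ B.schain (n + 1 - j.1),
        x = B.star u v}

/-- An ideal of a left brace: an additive subgroup, normal in `(A,∘)`, and
invariant under all maps `λ_a(x) = a * x + x`. -/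
structure IsIdeal (B : LeftBrace A) (I : AddSubgroup A) : Prop where
  lam_mem : ∀ a : A, ∀ x ∈ I, B.star a x + x ∈ I
  conj_mem : ∀ a : A, ∀ x ∈ I, B.circ (B.circ a x) (B.inv a) ∈ I

/-- Left chain of an ideal: `ichainL B I n = Iⁿ⁺¹`, where `I¹ = I` and `Iⁱ⁺¹`
is the additive subgroup generated by `{a * b : a ∈ I, b ∈ Iⁱ}`. -/
def ichainL (B : LeftBrace A) (I : AddSubgroup A) : ℕ → AddSubgroup A
  | 0 => I
  | n + 1 => AddSubgroup.closure {x | ∃ a ∈ I, ∃ b ∈ B.ichainL I n, x = B.star a b}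

/-- Right chain of an ideal: `ichainR B I n = I⁽ⁿ⁺¹⁾`, where `I⁽¹⁾ = I` and
`I⁽ⁱ⁺¹⁾` is the additive subgroup generated by `{a * b : a ∈ I⁽ⁱ⁾, b ∈ I}`. -/
def ichainR (B : LeftBrace A) (I : AddSubgroup A) : ℕ → AddSubgroup A
  | 0 => I
  | n + 1 => AddSubgroup.closure {x | ∃ a ∈ B.ichainR I n, ∃ b ∈ I, x = B.star a b}

end LeftBrace


namespace LeftBrace

variable {A : Type} [AddCommGroup A] (B : LeftBrace A)

lemma circ_inv_right (a : A) : B.circ a (B.inv a) = B.one := by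
  calc B.circ a (B.inv a) = B.circ (B.circ B.one a) (B.inv a) := by rw [B.one_circ]
    _ = B.circ (B.circ (B.circ (B.inv (B.inv a)) (B.inv a)) a) (B.inv a) := by
          rw [B.inv_circ]
    _ = B.circ (B.inv (B.inv a)) (B.circ (B.circ (B.inv a) a) (B.inv a)) := by
          rw [B.circ_assoc (B.inv (B.inv a)) (B.inv a) a,
            B.circ_assoc (B.inv (B.inv a)) (B.circ (B.inv a) a) (B.inv a)]
    _ = B.one := by rw [B.inv_circ, B.one_circ, B.inv_circ]

lemma inv_inv' (a : A) : B.inv (B.inv a) = a := by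
  calc B.inv (B.inv a) = B.circ (B.inv (B.inv a)) B.one := (B.circ_one _).symm
    _ = B.circ (B.inv (B.inv a)) (B.circ (B.inv a) a) := by rw [B.inv_circ]
    _ = a := by rw [← B.circ_assoc, B.inv_circ, B.one_circ]

lemma circ_add' (a b c : A) : B.circ a (b + c) = B.circ a b + B.circ a c - a :=
  eq_sub_of_add_eq (B.circ_add a b c)

lemma circ_zero (a : A) : B.circ a 0 = a := by
  have h := B.circ_add a 0 0
  rw [add_zero] at h
  exact (add_left_cancel h).symm

lemma one_eq_zero : B.one = (0 : A) := by
  calc B.one = B.circ B.one 0 := (B.circ_zero _).symm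
    _ = 0 := B.one_circ 0

lemma zero_circ (a : A) : B.circ 0 a = a := by
  rw [← B.one_eq_zero, B.one_circ]

lemma circ_neg (a x : A) : B.circ a (-x) = a + a - B.circ a x := by
  have h := B.circ_add a x (-x)
  rw [add_neg_cancel, B.circ_zero] at h
  rw [eq_sub_iff_add_eq, add_comm, ← h]

lemma star_zero_left (x : A) : B.star 0 x = 0 := by
  simp [star, B.zero_circ]

lemma star_add_right (a x y : A) : B.star a (x + y) = B.star a x + B.star a y := by
  simp only [star, B.circ_add']
  abel

lemma star_neg_right (a x : A) : B.star a (-x) = -B.star a x := by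
  simp only [star, B.circ_neg]
  abel

lemma star_sub_right (a x y : A) : B.star a (x - y) = B.star a x - B.star a y := by
  rw [sub_eq_add_neg, B.star_add_right, B.star_neg_right, sub_eq_add_neg]

lemma star_star (a b c : A) :
    B.star a (B.star b c) = B.star (B.circ a b) c - B.star a c - B.star b c := by
  have h : B.star b c = B.circ b c - b - c := rfl
  rw [h, B.star_sub_right, B.star_sub_right]
  simp only [star, B.circ_assoc]
  abel

end LeftBrace

/-- for ideals `I, J` of a left brace `A` and any `c ∈ A`,
`I*(J*c) ⊆ I*c + I*(−c) + I*(I*c) + J*(I*c) + I*(J*(I*c)) + I*(I*(−c))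
+ J*(I*(−c)) + I*(J*(I*(−c)))`. -/
theorem ideal_star_star_subset {A : Type} [AddCommGroup A] (B : LeftBrace A)
    (I J : AddSubgroup A) (hI : B.IsIdeal I) (hJ : B.IsIdeal J)
    (c : A) (a : A) (ha : a ∈ I) (b : A) (hb : b ∈ J) :
    ∃ t₁ t₂ t₃ t₄ t₅ t₆ t₇ t₈ : A,
      (∃ x ∈ I, t₁ = B.star x c) ∧
      (∃ x ∈ I, t₂ = B.star x (-c)) ∧
      (∃ x ∈ I, ∃ y ∈ I, t₃ = B.star x (B.star y c)) ∧
      (∃ x ∈ J, ∃ y ∈ I, t₄ = B.star x (B.star y c)) ∧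
      (∃ x ∈ I, ∃ y ∈ J, ∃ z ∈ I, t₅ = B.star x (B.star y (B.star z c))) ∧
      (∃ x ∈ I, ∃ y ∈ I, t₆ = B.star x (B.star y (-c))) ∧
      (∃ x ∈ J, ∃ y ∈ I, t₇ = B.star x (B.star y (-c))) ∧
      (∃ x ∈ I, ∃ y ∈ J, ∃ z ∈ I, t₈ = B.star x (B.star y (B.star z (-c)))) ∧
      B.star a (B.star b c) = t₁ + t₂ + t₃ + t₄ + t₅ + t₆ + t₇ + t₈ := by
  set a' := B.circ (B.circ (B.inv b) a) b with ha'def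
  have ha' : a' ∈ I := by
    have h := hI.conj_mem (B.inv b) a ha
    rwa [B.inv_inv'] at h
  have hba : B.circ b a' = B.circ a b := by
    rw [ha'def, ← B.circ_assoc, ← B.circ_assoc, B.circ_inv_right, B.one_circ]
  have h1 := B.star_star a b c
  have h2 := B.star_star b a' c
  rw [hba] at h2
  have main : B.star a (B.star b c)
      = B.star a' c + B.star a (-c) + B.star b (B.star a' c) := by
    rw [h1, h2, B.star_neg_right]
    abel
  refine ⟨B.star a' c, B.star a (-c), 0, B.star b (B.star a' c), 0, 0, 0, 0,
    ⟨a', ha', rfl⟩, ⟨a, ha, rfl⟩,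
    ⟨0, I.zero_mem, 0, I.zero_mem, (B.star_zero_left _).symm⟩,
    ⟨b, hb, a', ha', rfl⟩,
    ⟨0, I.zero_mem, 0, J.zero_mem, 0, I.zero_mem, (B.star_zero_left _).symm⟩,
    ⟨0, I.zero_mem, 0, I.zero_mem, (B.star_zero_left _).symm⟩,
    ⟨0, J.zero_mem, 0, I.zero_mem, (B.star_zero_left _).symm⟩,
    ⟨0, I.zero_mem, 0, J.zero_mem, 0, I.zero_mem, (B.star_zero_left _).symm⟩, ?_⟩
  rw [main]
  abel
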